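/- arXiv:1710.09752 — 4 statements merged into one kernel-verified Lean document; each statement's English description precedes it below -/
import Mathlib

section
/- Under the hypotheses of the previous statement, if additionally V(x) ≤ c₂ * ‖x‖² for all x ∈ E (a normed space), then ∑_{k=0}^∞ W(xₖ) ≤ (c₂/c₁) * ‖x₀‖². -/
/-!
Summing the decrease condition telescopes: `c₁ ∑_{k<n} W(xₖ) ≤ V(x₀) - V(xₙ) ≤ V(x₀) ≤ c₂ ‖x₀‖²`,
uniformly in `n`, and a series of nonnegative terms is bounded by any bound on its partial sums.
-/

open Finset

theorem mul_sum_range_le_sub_of_sub_le {v w : ℕ → ℝ} {c : ℝ}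
    (hdec : ∀ k, v (k + 1) - v k ≤ -c * w k) (n : ℕ) :
    c * ∑ k ∈ range n, w k ≤ v 0 - v n := by
  have htel : ∑ k ∈ range n, (v (k + 1) - v k) ≤ ∑ k ∈ range n, -c * w k :=
    sum_le_sum fun k _ => hdec k
  rw [sum_range_sub, ← mul_sum] at htel
  linarith

theorem tsum_le_div_of_sub_le {v w : ℕ → ℝ} {c : ℝ} (hc : 0 < c)
    (hv : ∀ k, 0 ≤ v k) (hw : ∀ k, 0 ≤ w k)
    (hdec : ∀ k, v (k + 1) - v k ≤ -c * w k) :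
    ∑' k, w k ≤ v 0 / c := by
  refine Real.tsum_le_of_sum_range_le hw fun n => ?_
  rw [le_div_iff₀ hc, mul_comm]
  linarith [mul_sum_range_le_sub_of_sub_le hdec n, hv n]

theorem stmt_4_general {E : Type*} [NormedAddCommGroup E]
    (V W : E → ℝ) (hV : ∀ x, 0 ≤ V x) (hW : ∀ x, 0 ≤ W x)
    (c₁ c₂ : ℝ) (hc₁ : 0 < c₁)
    (hVbound : ∀ x, V x ≤ c₂ * ‖x‖ ^ 2) (x : ℕ → E)
    (hdiff : ∀ k, V (x (k + 1)) - V (x k) ≤ -c₁ * W (x k)) :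
    ∑' k, W (x k) ≤ (c₂ / c₁) * ‖x 0‖ ^ 2 :=
  calc ∑' k, W (x k) ≤ V (x 0) / c₁ :=
        tsum_le_div_of_sub_le hc₁ (fun k => hV (x k)) (fun k => hW (x k)) hdiff
    _ ≤ c₂ * ‖x 0‖ ^ 2 / c₁ := by gcongr; exact hVbound (x 0)
    _ = (c₂ / c₁) * ‖x 0‖ ^ 2 := by ring

theorem stmt_4 {E : Type*} [NormedAddCommGroup E] [NormedSpace ℝ E]
    (V W : E → ℝ) (hV : ∀ x, 0 ≤ V x) (hW : ∀ x, 0 ≤ W x)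
    (c₁ c₂ : ℝ) (hc₁ : 0 < c₁) (hc₂ : 0 < c₂)
    (hVbound : ∀ x, V x ≤ c₂ * ‖x‖ ^ 2) (x : ℕ → E)
    (hdiff : ∀ k, V (x (k + 1)) - V (x k) ≤ -c₁ * W (x k)) :
    ∑' k, W (x k) ≤ (c₂ / c₁) * ‖x 0‖ ^ 2 :=
  stmt_4_general V W hV hW c₁ c₂ hc₁ hVbound x hdiff
end

section
/- Let E be a real normed space, V : E → ℝ convex and nonnegative with V(0) = 0, and β > 1. Let f : E → E, g : ℝᵐ → E linear (constant in x), m : E → F, m₁ : ℝᵐ → G linear, and γ > 0. Assume (i) (1/β) * V(β • f(x)) - V(x) + ‖m(x)‖² ≤ 0 for all x, and (ii) for all v ≠ 0, ((β-1)/β) * V((β/(β-1)) • g(v)) + ‖m₁ v‖² ≤ γ² * ‖v‖². Then for every x ∈ E and v ∈ ℝᵐ: V(f(x) + g(v)) - V(x) ≤ -(‖m(x)‖² + ‖m₁ v‖²) + γ² * ‖v‖². -/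
theorem stmt_8 {E F G : Type*} [NormedAddCommGroup E] [NormedSpace ℝ E]
    [NormedAddCommGroup F] [InnerProductSpace ℝ F]
    [NormedAddCommGroup G] [InnerProductSpace ℝ G]
    {mdim : ℕ}
    (V : E → ℝ) (hconv : ConvexOn ℝ Set.univ V) (hnn : ∀ x, 0 ≤ V x)
    (h0 : V 0 = 0) (β : ℝ) (hβ : 1 < β)
    (f : E → E) (g : EuclideanSpace ℝ (Fin mdim) →ₗ[ℝ] E)
    (m : E → F) (m₁ : EuclideanSpace ℝ (Fin mdim) →ₗ[ℝ] G)
    (γ : ℝ) (hγ : 0 < γ)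
    (hi : ∀ x, (1 / β) * V (β • f x) - V x + ‖m x‖ ^ 2 ≤ 0)
    (hii : ∀ v : EuclideanSpace ℝ (Fin mdim), v ≠ 0 →
      ((β - 1) / β) * V ((β / (β - 1)) • g v) + ‖m₁ v‖ ^ 2 ≤ γ ^ 2 * ‖v‖ ^ 2) :
    ∀ (x : E) (v : EuclideanSpace ℝ (Fin mdim)),
      V (f x + g v) - V x ≤ -(‖m x‖ ^ 2 + ‖m₁ v‖ ^ 2) + γ ^ 2 * ‖v‖ ^ 2 := by
  intro x v
  have hβ0 : (0:ℝ) < β := lt_trans one_pos hβ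
  have hβ1 : (0:ℝ) < β - 1 := by linarith
  -- key terms
  have ha : (0:ℝ) ≤ 1 / β := by positivity
  have hb : (0:ℝ) ≤ (β - 1) / β := by positivity
  have hab : 1 / β + (β - 1) / β = 1 := by field_simp; ring
  have hsplit : f x + g v = (1 / β) • (β • f x) + ((β - 1) / β) • ((β / (β - 1)) • g v) := by
    rw [smul_smul, smul_smul]
    have h1 : (1 / β) * β = 1 := by field_simp
    have h2 : ((β - 1) / β) * (β / (β - 1)) = 1 := by
      field_simp
    rw [h1, h2, one_smul, one_smul]
  have hconvineq : V (f x + g v) ≤ (1 / β) * V (β • f x) + ((β - 1) / β) * V ((β / (β - 1)) • g v) := by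
    rw [hsplit]
    exact hconv.2 (Set.mem_univ _) (Set.mem_univ _) ha hb hab
  have hiv : ((β - 1) / β) * V ((β / (β - 1)) • g v) + ‖m₁ v‖ ^ 2 ≤ γ ^ 2 * ‖v‖ ^ 2 := by
    by_cases hv : v = 0
    · subst hv
      simp [h0]
    · exact hii v hv
  have h1 := hi x
  nlinarith [hconvineq, h1, hiv]
end

section
/- Let V : E → ℝ satisfy, for some continuous functions C₁, C₂ : ℝ → ℝ with C₂(1) ≤ C₁(1) < 1 and some β₀ > 1 with β₀ - C₁(β₀) > 0 and C₁(β₀) > 0: (a) T_β V(x) ≤ C₁(β) V(x) and T_β V(x) ≥ C₂(β) V(x) for β ∈ {1, β₀}, where T_β V(x) := V(β • f(x)) for a fixed map f (deterministic version of E[V(βf(x,ω))]); and (b) V(f(x)) - V(x) + ‖m(x)‖² ≤ 0 for all x. Set q₀ = C₁(β₀)(1 - C₂(1))/(β₀ - C₁(β₀)) and p₀ = q₀β₀/C₁(β₀), and define W = p₀ • V. Then (1/β₀) * W(β₀ • f(x)) - W(x) + ‖m(x)‖² ≤ 0 for all x. -/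
/-!
Since `C₂(1) V x ≤ V (f x)`, the dissipation inequality still holds when `V x` is replaced by
`(1 - C₂(1) + q) V x` and `q V x` is added, for any `q ≥ 0`. The bound `V (β₀ • f x) ≤ C₁(β₀) V x`
lets `q V x` be traded for `(q / C₁(β₀)) V (β₀ • f x)`, and `q₀` is exactly the value of `q` for
which `q / C₁(β₀) = p₀ / β₀` with `p₀ = q + 1 - C₂(1)`.
-/

theorem dissipation_le_zero_of_growth_bounds {a v y s c₂ c₁ q : ℝ} (hq : 0 ≤ q) (hc₁ : 0 < c₁)
    (hlow : c₂ * v ≤ a) (hup : y ≤ c₁ * v) (hdiss : a - v + s ≤ 0) :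
    q / c₁ * y - (q + (1 - c₂)) * v + s ≤ 0 := by
  have hy : q / c₁ * y ≤ q * v :=
    calc q / c₁ * y ≤ q / c₁ * (c₁ * v) := mul_le_mul_of_nonneg_left hup (by positivity)
      _ = q * v := by field_simp
  linarith

theorem mul_div_eq_add_of_eq_mul_div {q β c₁ r : ℝ} (hc₁ : c₁ ≠ 0) (hβc : β - c₁ ≠ 0)
    (hq : q = c₁ * r / (β - c₁)) :
    q * β / c₁ = q + r := by
  subst hq
  field_simp
  ring

theorem stmt_13_general {E F : Type*} [AddCommGroup E] [Module ℝ E]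
    [NormedAddCommGroup F]
    (f : E → E) (m : E → F) (V : E → ℝ)
    (c11 c21 c1b c2b β₀ q₀ p₀ : ℝ)
    (hc21 : c21 < 1)
    (hβc : 0 < β₀ - c1b) (hc1b : 0 < c1b)
    (ha1 : ∀ x, c21 * V x ≤ V (f x) ∧ V (f x) ≤ c11 * V x)
    (ha2 : ∀ x, c2b * V x ≤ V (β₀ • f x) ∧ V (β₀ • f x) ≤ c1b * V x)
    (hb : ∀ x, V (f x) - V x + ‖m x‖ ^ 2 ≤ 0)
    (hq₀ : q₀ = c1b * (1 - c21) / (β₀ - c1b))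
    (hp₀ : p₀ = q₀ * β₀ / c1b) :
    ∀ x, (1 / β₀) * (p₀ * V (β₀ • f x)) - p₀ * V x + ‖m x‖ ^ 2 ≤ 0 := by
  intro x
  have hq₀_nonneg : 0 ≤ q₀ := hq₀ ▸ by have := sub_pos.2 hc21; positivity
  have hp₀_eq : p₀ = q₀ + (1 - c21) :=
    hp₀.trans (mul_div_eq_add_of_eq_mul_div hc1b.ne' hβc.ne' hq₀)
  have hweight : 1 / β₀ * p₀ = q₀ / c1b := by
    rw [hp₀]
    field_simp [show β₀ ≠ 0 by linarith]
  rw [← mul_assoc, hweight, hp₀_eq]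
  exact dissipation_le_zero_of_growth_bounds hq₀_nonneg hc1b (ha1 x).1 (ha2 x).2 (hb x)

theorem stmt_13 {E F : Type*} [AddCommGroup E] [Module ℝ E]
    [NormedAddCommGroup F] [InnerProductSpace ℝ F]
    (f : E → E) (m : E → F) (V : E → ℝ) (hVnn : ∀ x, 0 ≤ V x)
    (c11 c21 c1b c2b β₀ q₀ p₀ : ℝ)
    (hc21 : c21 < 1) (hc : c21 ≤ c11) (hc11 : c11 < 1)
    (hβ₀ : 1 < β₀) (hβc : 0 < β₀ - c1b) (hc1b : 0 < c1b)
    (ha1 : ∀ x, c21 * V x ≤ V (f x) ∧ V (f x) ≤ c11 * V x)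
    (ha2 : ∀ x, c2b * V x ≤ V (β₀ • f x) ∧ V (β₀ • f x) ≤ c1b * V x)
    (hb : ∀ x, V (f x) - V x + ‖m x‖ ^ 2 ≤ 0)
    (hq₀ : q₀ = c1b * (1 - c21) / (β₀ - c1b))
    (hp₀ : p₀ = q₀ * β₀ / c1b) :
    ∀ x, (1 / β₀) * (p₀ * V (β₀ • f x)) - p₀ * V x + ‖m x‖ ^ 2 ≤ 0 :=
  stmt_13_general f m V c11 c21 c1b c2b β₀ q₀ p₀ hc21 hβc hc1b ha1 ha2 hb hq₀ hp₀
end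

section
/- Let N be a symmetric q×q real matrix and γ > 0 with γ²I - N positive definite. Then for every η ∈ ℝ^q: sup over v ∈ ℝ^q of [(1/2)(v-η)ᵀN(v-η) - γ²‖v‖²] ≤ (1/2) ηᵀ[N + N(γ²I-N)⁻¹N]η. -/
open Matrix

private lemma symm_dot {q : ℕ} (A : Matrix (Fin q) (Fin q) ℝ) (hA : Aᵀ = A)
    (x y : Fin q → ℝ) : A *ᵥ x ⬝ᵥ y = A *ᵥ y ⬝ᵥ x := by
  nth_rewrite 1 [← hA]
  rw [mulVec_transpose, ← dotProduct_mulVec, dotProduct_comm]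

theorem stmt_15 {q : ℕ} (N : Matrix (Fin q) (Fin q) ℝ) (hN : N.IsSymm)
    (γ : ℝ) (hγ : 0 < γ)
    (hPD : ((γ ^ 2) • (1 : Matrix (Fin q) (Fin q) ℝ) - N).PosDef)
    (hhalf : ((γ ^ 2) • (1 : Matrix (Fin q) (Fin q) ℝ) - (1 / 2 : ℝ) • N).PosSemidef) :
    ∀ v η : Fin q → ℝ,
      (1 / 2) * (N.mulVec (v - η) ⬝ᵥ (v - η)) - γ ^ 2 * (v ⬝ᵥ v) ≤
        (1 / 2) * ((N + N * ((γ ^ 2) • (1 : Matrix (Fin q) (Fin q) ℝ) - N)⁻¹ * N).mulVec η ⬝ᵥ η) := by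
  intro v η
  set M : Matrix (Fin q) (Fin q) ℝ := (γ ^ 2) • (1 : Matrix (Fin q) (Fin q) ℝ) - N with hMdef
  have hNt : Nᵀ = N := hN
  have hMt : Mᵀ = M := by
    rw [hMdef, transpose_sub, transpose_smul, transpose_one, hNt]
  have hdet : IsUnit M.det := isUnit_iff_isUnit_det M |>.mp hPD.isUnit
  have hMinv : M * M⁻¹ = 1 := mul_nonsing_inv M hdet
  have hMit : (M⁻¹)ᵀ = M⁻¹ := by rw [transpose_nonsing_inv, hMt]
  set w : Fin q → ℝ := M⁻¹ *ᵥ (N *ᵥ η) with hw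
  have hMw : M *ᵥ w = N *ᵥ η := by
    rw [hw, mulVec_mulVec, hMinv, one_mulVec]
  set u : Fin q → ℝ := v + w with hu
  -- nonnegativity of the two completed squares
  have h1 : 0 ≤ v ⬝ᵥ v := Finset.sum_nonneg fun i _ => mul_self_nonneg (v i)
  have h2 : 0 ≤ M *ᵥ u ⬝ᵥ u := by
    have := hPD.posSemidef.dotProduct_mulVec_nonneg u
    simpa [star, dotProduct_comm] using this
  -- algebraic identity
  have hMv : M *ᵥ v = γ ^ 2 • v - N *ᵥ v := by
    rw [hMdef, sub_mulVec, smul_mulVec, one_mulVec]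
  have key : (1 / 2) * ((N + N * M⁻¹ * N) *ᵥ η ⬝ᵥ η)
      - ((1 / 2) * (N *ᵥ (v - η) ⬝ᵥ (v - η)) - γ ^ 2 * (v ⬝ᵥ v))
      = (γ ^ 2 / 2) * (v ⬝ᵥ v) + (1 / 2) * (M *ᵥ u ⬝ᵥ u) := by
    have e1 : (N + N * M⁻¹ * N) *ᵥ η ⬝ᵥ η = N *ᵥ η ⬝ᵥ η + N *ᵥ w ⬝ᵥ η := by
      rw [add_mulVec, add_dotProduct, Matrix.mul_assoc, ← mulVec_mulVec, ← mulVec_mulVec, hw]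
    have e2 : N *ᵥ w ⬝ᵥ η = N *ᵥ η ⬝ᵥ w := symm_dot N hNt w η
    have e3 : M *ᵥ u ⬝ᵥ u = M *ᵥ v ⬝ᵥ v + 2 * (N *ᵥ η ⬝ᵥ v) + N *ᵥ η ⬝ᵥ w := by
      have hsw : M *ᵥ v ⬝ᵥ w = N *ᵥ η ⬝ᵥ v := by
        rw [symm_dot M hMt v w, hMw]
      rw [hu, mulVec_add, add_dotProduct, dotProduct_add, dotProduct_add, hsw, hMw]
      ring
    have e4 : M *ᵥ v ⬝ᵥ v = γ ^ 2 * (v ⬝ᵥ v) - N *ᵥ v ⬝ᵥ v := by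
      rw [hMv, sub_dotProduct, smul_dotProduct, smul_eq_mul]
    have e5 : N *ᵥ (v - η) ⬝ᵥ (v - η)
        = N *ᵥ v ⬝ᵥ v - 2 * (N *ᵥ η ⬝ᵥ v) + N *ᵥ η ⬝ᵥ η := by
      rw [mulVec_sub, sub_dotProduct, dotProduct_sub, dotProduct_sub,
        symm_dot N hNt v η]
      ring
    rw [e1, e2, e3, e4, e5]; ring
  have h1' : 0 ≤ γ ^ 2 / 2 * (v ⬝ᵥ v) := by positivity
  linarith
end
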